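/- Let N ≥ 14 be an even natural number and define MAJ : (Fin N → Bool) → ℝ by MAJ(x) = 1 if the Hamming weight |x| satisfies |x| ≥ N/2, and MAJ(x) = −1 otherwise. Let S be a finite set of points of the Boolean cube with |S| ≥ 2^N·(1 − 1/(2N²)), and let Q : (Fin N → Bool) → ℝ satisfy |Q(x)| ≤ 1 for every x and Q(x)·MAJ(x) ≥ 1 − 1/N² for every x ∈ S. Then the Fourier degree of Q is at least N−1; that is, there exists a subset B of Fin N with |B| ≥ N−1 and Q̂(B) ≠ 0. -/

import Mathlib

open Finset

/-- Hamming weight of a point of the Boolean cube. -/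
def hw {N : ℕ} (x : Fin N → Bool) : ℕ :=
  (Finset.univ.filter fun i => x i = true).card

/-- Walsh character at index set `B`. -/
noncomputable def walsh {N : ℕ} (B : Finset (Fin N)) (x : Fin N → Bool) : ℝ :=
  (-1 : ℝ) ^ (B.filter fun i => x i = true).card

/-- Fourier–Walsh coefficient of `f` at `B`. -/
noncomputable def walshCoeff {N : ℕ} (f : (Fin N → Bool) → ℝ) (B : Finset (Fin N)) : ℝ :=
  ((2 : ℝ) ^ N)⁻¹ * ∑ x : Fin N → Bool, f x * walsh B x

open Classical in
/-- Fourier degree of `f`: the largest size of an index set with nonzero coefficient. -/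
noncomputable def walshDegree {N : ℕ} (f : (Fin N → Bool) → ℝ) : ℕ :=
  (Finset.univ.filter fun B : Finset (Fin N) => walshCoeff f B ≠ 0).sup Finset.card

/-- Majority on an even number of bits (ties count as majority), with ±1 output. -/
noncomputable def MAJ {N : ℕ} (x : Fin N → Bool) : ℝ :=
  if ((hw x : ℝ) ≥ (N : ℝ) / 2) then 1 else -1

/-- Partial alternating sums of binomial coefficients. -/
lemma alt_sum_aux (n : ℕ) : ∀ m : ℕ,
    ∑ k ∈ range (m+1), (-1:ℝ)^k * ((n+1).choose k) = (-1)^m * (n.choose m) := by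
  intro m
  induction m with
  | zero => simp
  | succ m ih =>
    rw [Finset.sum_range_succ, ih, Nat.choose_succ_succ]
    push_cast
    ring

set_option maxHeartbeats 1000000 in
theorem stmt_10 {N : ℕ} (hN : 14 ≤ N) (heven : Even N)
    (S : Finset (Fin N → Bool))
    (hS : (S.card : ℝ) ≥ 2 ^ N * (1 - 1 / (2 * (N : ℝ) ^ 2)))
    (Q : (Fin N → Bool) → ℝ) (hQb : ∀ x, |Q x| ≤ 1)
    (hQM : ∀ x ∈ S, Q x * MAJ x ≥ 1 - 1 / (N : ℝ) ^ 2) :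
    ∃ B : Finset (Fin N), N - 1 ≤ B.card ∧ walshCoeff Q B ≠ 0 := by
  by_contra hcontra
  push_neg at hcontra
  have hcon : ∀ B : Finset (Fin N), N - 1 ≤ B.card → walshCoeff Q B = 0 := hcontra
  obtain ⟨p, hp⟩ := heven
  obtain ⟨m, hNm⟩ : ∃ m, N = 2 * m := ⟨p, by omega⟩
  set i0 : Fin N := ⟨N-1, by omega⟩ with hi0
  set U' : Finset (Fin N) := Finset.univ.erase i0 with hU'
  set c : (Fin N → Bool) → ℝ := fun x => if x i0 = false then (-1:ℝ)^(hw x) else 0 with hc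
  have hU'card : U'.card = N - 1 := by
    rw [hU', Finset.card_erase_of_mem (Finset.mem_univ _), Finset.card_univ, Fintype.card_fin]
  -- Step A : the linear functional kills Q
  have hL : ∑ x : Fin N → Bool, c x * Q x = 0 := by
    have hptw : ∀ x : Fin N → Bool,
        c x = (walsh U' x + walsh Finset.univ x) / 2 := by
      intro x
      have huniv : walsh Finset.univ x = (-1:ℝ)^(hw x) := rfl
      have hfe : (U'.filter fun i => x i = true)
          = (Finset.univ.filter fun i => x i = true).erase i0 := by
        rw [hU', Finset.filter_erase]
      by_cases hx : x i0 = true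
      · have hi0mem : i0 ∈ Finset.univ.filter fun i => x i = true := by simp [hx]
        have hcard : (U'.filter fun i => x i = true).card = hw x - 1 := by
          rw [hfe, Finset.card_erase_of_mem hi0mem]; rfl
        have hpos : 1 ≤ hw x := Finset.card_pos.mpr ⟨i0, hi0mem⟩
        have hwU : walsh U' x = (-1:ℝ)^(hw x - 1) := by rw [walsh, hcard]
        rw [hwU, huniv]
        have hrw : (-1:ℝ)^(hw x) = (-1:ℝ)^(hw x - 1) * (-1) := by
          rw [← pow_succ]; congr 1; omega
        simp [hc, hx, hrw]
      · have hi0mem : i0 ∉ Finset.univ.filter fun i => x i = true := by simp [hx]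
        have hwU : walsh U' x = (-1:ℝ)^(hw x) := by
          rw [walsh, hfe, Finset.erase_eq_of_notMem hi0mem]; rfl
        rw [hwU, huniv]
        simp [hc, hx]
    have h1 : ∑ x : Fin N → Bool, Q x * walsh U' x = 0 := by
      have := hcon U' (by rw [hU'card])
      rw [walshCoeff] at this
      rcases mul_eq_zero.mp this with h | h
      · exact absurd h (by positivity)
      · exact h
    have h2 : ∑ x : Fin N → Bool, Q x * walsh Finset.univ x = 0 := by
      have := hcon Finset.univ (by rw [Finset.card_univ, Fintype.card_fin]; omega)
      rw [walshCoeff] at this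
      rcases mul_eq_zero.mp this with h | h
      · exact absurd h (by positivity)
      · exact h
    calc ∑ x : Fin N → Bool, c x * Q x
        = ∑ x : Fin N → Bool, (Q x * walsh U' x + Q x * walsh Finset.univ x) / 2 := by
          refine Finset.sum_congr rfl fun x _ => ?_
          rw [hptw x]; ring
      _ = 0 := by rw [← Finset.sum_div, Finset.sum_add_distrib, h1, h2]; norm_num
  -- Step B : the linear functional on MAJ is huge
  have hT : ∑ x : Fin N → Bool, c x * MAJ x
      = -2 * ((-1:ℝ)^(m - 1) * ((N-2).choose (m - 1))) := by
    set G : Finset (Fin N) → ℝ := fun A =>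
      (if i0 ∈ A then (0:ℝ) else (-1:ℝ)^A.card) *
        (if ((A.card : ℝ) ≥ (N : ℝ) / 2) then (1:ℝ) else -1) with hG
    let E : (Fin N → Bool) ≃ Finset (Fin N) :=
      { toFun := fun x => Finset.univ.filter fun i => x i = true
        invFun := fun A i => decide (i ∈ A)
        left_inv := fun x => by ext i; simp
        right_inv := fun A => by ext i; simp }
    have step1 : ∑ x : Fin N → Bool, c x * MAJ x = ∑ A : Finset (Fin N), G A := by
      refine Fintype.sum_equiv E _ _ fun x => ?_
      have hEx : (E x).card = hw x := rfl
      have hmem : i0 ∈ E x ↔ x i0 = true := by simp [E]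
      by_cases hx : x i0 = true <;>
        simp [hc, G, hEx, hmem, hx, MAJ]
    have step2 : ∑ A : Finset (Fin N), G A = ∑ A ∈ U'.powerset, G A := by
      rw [← Finset.powerset_univ]
      refine (Finset.sum_subset (Finset.powerset_mono.mpr (Finset.erase_subset _ _)) ?_).symm
      intro A hA hA'
      have : i0 ∈ A := by
        by_contra hni
        exact hA' (Finset.mem_powerset.mpr (Finset.subset_erase.mpr
          ⟨Finset.mem_powerset.mp hA, hni⟩))
      simp [G, this]
    have step3 : ∑ A ∈ U'.powerset, G A
        = ∑ k ∈ range N, ((N-1).choose k : ℝ) *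
            ((-1:ℝ)^k * (if ((k : ℝ) ≥ (N : ℝ) / 2) then (1:ℝ) else -1)) := by
      have hGA : ∀ A ∈ U'.powerset, G A
          = (fun k : ℕ => (-1:ℝ)^k * (if ((k : ℝ) ≥ (N : ℝ) / 2) then (1:ℝ) else -1)) A.card := by
        intro A hA
        have : i0 ∉ A := (Finset.subset_erase.mp (Finset.mem_powerset.mp hA)).2
        simp [G, this]
      rw [Finset.sum_congr rfl hGA]
      refine Eq.trans (Finset.sum_powerset_apply_card
        (fun k : ℕ => (-1:ℝ)^k * (if ((k : ℝ) ≥ (N : ℝ) / 2) then (1:ℝ) else -1))) ?_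
      rw [hU'card, show N - 1 + 1 = N from by omega]
      refine Finset.sum_congr rfl fun k _ => ?_
      rw [nsmul_eq_mul]
    have hcond : ∀ k : ℕ, (((k : ℝ) ≥ (N : ℝ) / 2) ↔ m ≤ k) := by
      intro k
      rw [ge_iff_le, div_le_iff₀ (by norm_num)]
      constructor
      · intro h
        have : N ≤ k * 2 := by exact_mod_cast h
        omega
      · intro h
        have : N ≤ k * 2 := by omega
        exact_mod_cast Nat.cast_le.mpr this
    have split : ∀ k : ℕ, ((N-1).choose k : ℝ) *
            ((-1:ℝ)^k * (if ((k : ℝ) ≥ (N : ℝ) / 2) then (1:ℝ) else -1))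
        = (-1:ℝ)^k * ((N-1).choose k : ℝ)
          - 2 * (if k < m then (-1:ℝ)^k * ((N-1).choose k : ℝ) else 0) := by
      intro k
      by_cases hk : m ≤ k
      · rw [if_pos ((hcond k).mpr hk), if_neg (by omega)]; ring
      · rw [if_neg (fun h => hk ((hcond k).mp h)), if_pos (by omega)]; ring
    rw [step1, step2, step3, Finset.sum_congr rfl fun k _ => split k, Finset.sum_sub_distrib]
    have hfull : ∑ k ∈ range N, (-1:ℝ)^k * ((N-1).choose k : ℝ) = 0 := by
      have h := alt_sum_aux (N-2) (N-1)
      rw [show N-1+1 = N from by omega, show N-2+1 = N-1 from by omega] at h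
      rw [h, Nat.choose_eq_zero_of_lt (by omega)]
      simp
    have hpart : ∑ k ∈ range N, (if k < m then (-1:ℝ)^k * ((N-1).choose k : ℝ) else 0)
        = (-1:ℝ)^(m - 1) * ((N-2).choose (m-1) : ℝ) := by
      rw [← Finset.sum_filter]
      have hfil : (range N).filter (· < m) = range m := by
        ext k; simp [Finset.mem_filter, Finset.mem_range]; omega
      rw [hfil]
      have h := alt_sum_aux (N-2) (m-1)
      rw [show m-1+1 = m from by omega, show N-2+1 = N-1 from by omega] at h
      exact h
    rw [hfull, ← Finset.mul_sum, hpart]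
    ring
  -- Step C : the error bound
  have hNR : (0:ℝ) < N := by positivity
  have hcard : (Fintype.card (Fin N → Bool) : ℝ) = 2 ^ N := by
    simp [Fintype.card_fun]
  have herr : |∑ x : Fin N → Bool, c x * MAJ x|
      ≤ 2 * 2 ^ N / (N : ℝ) ^ 2 := by
    have hdiff : ∑ x : Fin N → Bool, c x * MAJ x
        = ∑ x : Fin N → Bool, c x * (MAJ x - Q x) := by
      rw [show (∑ x : Fin N → Bool, c x * (MAJ x - Q x))
          = ∑ x : Fin N → Bool, (c x * MAJ x - c x * Q x) from
            Finset.sum_congr rfl fun x _ => by ring,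
        Finset.sum_sub_distrib, hL, sub_zero]
    rw [hdiff]
    have habs : ∀ x : Fin N → Bool, |c x * (MAJ x - Q x)| ≤ |MAJ x - Q x| := by
      intro x
      rw [abs_mul]
      have h1 : |c x| ≤ 1 := by
        rw [hc]
        by_cases hx : x i0 = false <;> simp [hx, abs_pow]
      calc |c x| * |MAJ x - Q x| ≤ 1 * |MAJ x - Q x| :=
            mul_le_mul_of_nonneg_right h1 (abs_nonneg _)
        _ = |MAJ x - Q x| := one_mul _
    have hSgood : ∀ x ∈ S, |MAJ x - Q x| ≤ 1 / (N : ℝ) ^ 2 := by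
      intro x hx
      have hq := hQM x hx
      have hb := abs_le.mp (hQb x)
      rw [MAJ] at hq ⊢
      by_cases hi : ((hw x : ℝ) ≥ (N : ℝ) / 2)
      · rw [if_pos hi] at hq ⊢
        rw [abs_le]
        constructor <;> nlinarith
      · rw [if_neg hi] at hq ⊢
        rw [abs_le]
        constructor <;> nlinarith
    have hbad : ∀ x : Fin N → Bool, |MAJ x - Q x| ≤ 2 := by
      intro x
      have hb := abs_le.mp (hQb x)
      rw [MAJ]
      by_cases hi : ((hw x : ℝ) ≥ (N : ℝ) / 2) <;>
        [rw [if_pos hi]; rw [if_neg hi]] <;> rw [abs_le] <;> constructor <;> linarith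
    calc |∑ x : Fin N → Bool, c x * (MAJ x - Q x)|
        ≤ ∑ x : Fin N → Bool, |c x * (MAJ x - Q x)| := Finset.abs_sum_le_sum_abs _ _
      _ ≤ ∑ x : Fin N → Bool, |MAJ x - Q x| := Finset.sum_le_sum fun x _ => habs x
      _ = ∑ x ∈ S, |MAJ x - Q x| + ∑ x ∈ Finset.univ \ S, |MAJ x - Q x| := by
          rw [← Finset.sum_sdiff (Finset.subset_univ S)]; ring
      _ ≤ ∑ x ∈ S, (1 / (N : ℝ) ^ 2) + ∑ x ∈ Finset.univ \ S, (2:ℝ) := by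
          refine add_le_add (Finset.sum_le_sum fun x hx => hSgood x hx)
            (Finset.sum_le_sum fun x _ => hbad x)
      _ = S.card * (1 / (N : ℝ) ^ 2) + (Finset.univ \ S).card * 2 := by
          rw [Finset.sum_const, Finset.sum_const]; push_cast; ring
      _ ≤ 2 * 2 ^ N / (N : ℝ) ^ 2 := by
          have hNsq : (0:ℝ) < (N:ℝ)^2 := by positivity
          have hS2 : (S.card : ℝ) ≤ 2 ^ N := by
            calc (S.card : ℝ) ≤ (Fintype.card (Fin N → Bool) : ℝ) := by
                  exact_mod_cast Finset.card_le_univ S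
              _ = 2 ^ N := hcard
          have hdS : ((Finset.univ \ S).card : ℝ) ≤ 2 ^ N / (2 * (N : ℝ) ^ 2) := by
            have h1 : ((Finset.univ \ S).card : ℝ)
                = (Fintype.card (Fin N → Bool) : ℝ) - S.card := by
              rw [Finset.card_sdiff_of_subset (Finset.subset_univ S)]
              push_cast [Finset.card_le_univ S, Finset.card_univ]
              ring
            rw [h1, hcard]
            rw [ge_iff_le, mul_sub, mul_one] at hS
            calc (2:ℝ) ^ N - S.card ≤ 2 ^ N * (1 / (2 * (N : ℝ) ^ 2)) := by linarith
              _ = 2 ^ N / (2 * (N : ℝ) ^ 2) := by ring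
          have hA : (S.card : ℝ) * (1 / (N : ℝ) ^ 2) ≤ 2 ^ N / (N : ℝ) ^ 2 := by
            rw [mul_one_div]
            gcongr
          have hB : ((Finset.univ \ S).card : ℝ) * 2 ≤ 2 ^ N / (N : ℝ) ^ 2 := by
            calc ((Finset.univ \ S).card : ℝ) * 2 ≤ (2 ^ N / (2 * (N : ℝ) ^ 2)) * 2 :=
                  mul_le_mul_of_nonneg_right hdS (by norm_num)
              _ = 2 ^ N / (N : ℝ) ^ 2 := by field_simp
          calc (S.card : ℝ) * (1 / (N : ℝ) ^ 2) + ((Finset.univ \ S).card : ℝ) * 2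
              ≤ 2 ^ N / (N : ℝ) ^ 2 + 2 ^ N / (N : ℝ) ^ 2 := add_le_add hA hB
            _ = 2 * 2 ^ N / (N : ℝ) ^ 2 := by ring
  -- Step D : contradiction
  have hTabs : |∑ x : Fin N → Bool, c x * MAJ x|
      = 2 * ((N-2).choose (m - 1) : ℝ) := by
    have h0 : (0:ℝ) ≤ ((N-2).choose (m-1) : ℝ) := Nat.cast_nonneg _
    rw [hT, abs_mul, abs_mul, abs_pow]
    norm_num [abs_of_nonneg h0]
  have hm7 : 7 ≤ m := by omega
  have hcb : (N - 2).choose (m - 1) = Nat.centralBinom (m - 1) := by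
    rw [Nat.centralBinom]
    congr 1
    omega
  have hlow : (4:ℕ) ^ (m - 1) < (m - 1) * Nat.centralBinom (m - 1) :=
    Nat.four_pow_lt_mul_centralBinom (m - 1) (by omega)
  set cb : ℝ := ((N-2).choose (m - 1) : ℝ) with hcb'
  have hNsq : (0:ℝ) < (N:ℝ)^2 := by positivity
  have hlowR : (4:ℝ) ^ (m - 1) < ((m:ℝ) - 1) * cb := by
    rw [hcb', hcb]
    calc (4:ℝ) ^ (m-1) = ((4 ^ (m-1) : ℕ) : ℝ) := by push_cast; ring
      _ < (((m - 1) * Nat.centralBinom (m - 1) : ℕ) : ℝ) := by exact_mod_cast hlow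
      _ = ((m:ℝ) - 1) * (Nat.centralBinom (m - 1) : ℝ) := by
          rw [Nat.cast_mul, Nat.cast_sub (show 1 ≤ m by omega), Nat.cast_one]
  have h4pow : (4:ℝ) ^ (m - 1) = 2 ^ (N - 2) := by
    rw [show (4:ℝ) = 2^2 from by norm_num, ← pow_mul]
    congr 1
    omega
  have h2N : (2:ℝ) ^ N = 2 ^ (N - 2) * 4 := by
    rw [show (4:ℝ) = 2^2 from by norm_num, ← pow_add]
    congr 1
    omega
  have hP : (0:ℝ) < (2:ℝ) ^ (N - 2) := by positivity
  have hub : 2 * cb ≤ 2 * 2 ^ N / (N : ℝ) ^ 2 := by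
    rw [← hTabs]
    exact herr
  have hub2 : cb ≤ 2 ^ N / (N:ℝ)^2 := by
    have h := hub
    rw [mul_div_assoc] at h
    linarith
  have hub3 : cb * (N:ℝ)^2 ≤ 2 ^ (N-2) * 4 := by
    rw [← h2N]
    exact (le_div_iff₀ hNsq).mp hub2
  have hm1 : ((m:ℝ) - 1) * 2 = (N:ℝ) - 2 := by
    have : (N:ℝ) = 2 * m := by exact_mod_cast hNm
    linarith
  have hN14 : (14:ℝ) ≤ (N:ℝ) := by exact_mod_cast hN
  have hm7R : (7:ℝ) ≤ (m:ℝ) := by exact_mod_cast hm7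
  have hkey : (2:ℝ)^(N-2) < ((m:ℝ) - 1) * cb := by rw [← h4pow]; exact hlowR
  have hstep1 : (2:ℝ)^(N-2) * (N:ℝ)^2 < (((m:ℝ) - 1) * cb) * (N:ℝ)^2 :=
    mul_lt_mul_of_pos_right hkey hNsq
  have hstep2 : (((m:ℝ) - 1) * cb) * (N:ℝ)^2 ≤ ((m:ℝ) - 1) * (2^(N-2) * 4) := by
    have hμ : (0:ℝ) ≤ (m:ℝ) - 1 := by linarith
    calc (((m:ℝ) - 1) * cb) * (N:ℝ)^2 = ((m:ℝ) - 1) * (cb * (N:ℝ)^2) := by ring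
      _ ≤ ((m:ℝ) - 1) * (2^(N-2) * 4) := mul_le_mul_of_nonneg_left hub3 hμ
  nlinarith [hstep1, hstep2, hm1, hP, hN14, sq_nonneg ((N:ℝ) - 1)]
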